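/- arXiv:2210.04231 — 3 statements merged into one kernel-verified Lean document; each statement's English description precedes it below -/
import Mathlib

section
/- Suppose points p_k, p_{k+1} ∈ ℝᵈ satisfy ‖p_{k+1} - p_k‖₂ ≤ h·v_max and both satisfy ‖p_k - q_k‖₂ ≥ r', ‖p_{k+1} - q_{k+1}‖₂ ≥ r' for another trajectory q with ‖q_{k+1} - q_k‖₂ ≤ h·v_max, where r' = √(r_min² + h²·v_max²). Then for every λ ∈ [0,1], the linear interpolants satisfy ‖(λ p_{k+1} + (1-λ) p_k) - (λ q_{k+1} + (1-λ) q_k)‖₂ ≥ r_min. -/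
theorem interval_collision_avoidance (d : ℕ) (h vmax rmin : ℝ)
    (hh : 0 < h) (hv : 0 < vmax) (hr : 0 < rmin)
    (r' : ℝ) (hr' : r' = Real.sqrt (rmin ^ 2 + h ^ 2 * vmax ^ 2))
    (pk pk1 qk qk1 : EuclideanSpace ℝ (Fin d))
    (hp : ‖pk1 - pk‖ ≤ h * vmax) (hq : ‖qk1 - qk‖ ≤ h * vmax)
    (hrel : ‖(pk1 - qk1) - (pk - qk)‖ ≤ h * vmax)
    (hk : ‖pk - qk‖ ≥ r') (hk1 : ‖pk1 - qk1‖ ≥ r') :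
    ∀ lam : ℝ, lam ∈ Set.Icc (0 : ℝ) 1 →
      ‖(lam • pk1 + (1 - lam) • pk) - (lam • qk1 + (1 - lam) • qk)‖ ≥ rmin := by
  intro lam hlam
  obtain ⟨h0, h1⟩ := hlam
  set a := pk - qk with ha
  set b := pk1 - qk1 with hb
  have hEq : (lam • pk1 + (1 - lam) • pk) - (lam • qk1 + (1 - lam) • qk)
      = lam • b + (1 - lam) • a := by
    rw [ha, hb, smul_sub, smul_sub]; abel
  rw [hEq]
  have hr'nn : 0 ≤ r' := hr' ▸ Real.sqrt_nonneg _
  have hr'sq : r' ^ 2 = rmin ^ 2 + h ^ 2 * vmax ^ 2 := by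
    rw [hr']; exact Real.sq_sqrt (by positivity)
  have key : ‖lam • b + (1 - lam) • a‖ ^ 2 =
      lam ^ 2 * ‖b‖ ^ 2 + 2 * (lam * (1 - lam)) * (inner ℝ b a : ℝ)
        + (1 - lam) ^ 2 * ‖a‖ ^ 2 := by
    rw [norm_add_sq_real, norm_smul, norm_smul, real_inner_smul_left,
      real_inner_smul_right, Real.norm_eq_abs, Real.norm_eq_abs,
      abs_of_nonneg h0, abs_of_nonneg (by linarith : (0:ℝ) ≤ 1 - lam)]
    ring
  have hsub : ‖b - a‖ ^ 2 = ‖b‖ ^ 2 - 2 * (inner ℝ b a : ℝ) + ‖a‖ ^ 2 :=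
    norm_sub_sq_real b a
  have hzn : 0 ≤ ‖b - a‖ := norm_nonneg _
  have h2 : rmin ^ 2 ≤ ‖lam • b + (1 - lam) • a‖ ^ 2 := by
    nlinarith [mul_nonneg h0 (by linarith : (0:ℝ) ≤ 1 - lam),
      sq_nonneg (‖b - a‖), sq_nonneg lam, sq_nonneg (1 - lam),
      mul_le_mul hrel hrel hzn (le_of_lt (by positivity : (0:ℝ) < h * vmax)),
      mul_le_mul hk hk hr'nn (le_trans hr'nn hk),
      mul_le_mul hk1 hk1 hr'nn (le_trans hr'nn hk1),
      sq_nonneg (lam * ‖b - a‖), sq_nonneg ((1 - lam) * ‖b - a‖)]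
  nlinarith [norm_nonneg (lam • b + (1 - lam) • a), h2]
end

section
/- Consider the shifted candidate solution: given states x_k(t-h), k = 0,…,K and inputs u_k(t-h), k = 0,…,K-1 satisfying x_k = A x_{k-1} + B u_{k-1}, ‖Θ_a u_{k-1}‖₂ ≤ a_max, ‖Θ_v v_k‖₂ ≤ v_max, and v_K(t-h) = 0, define x_k(t) = x_{k+1}(t-h) for k = 0,…,K-1, x_K(t) = x_K(t-h), u_k(t) = u_{k+1}(t-h) for k = 0,…,K-2, and u_{K-1}(t) = 0. Then the shifted sequences again satisfy the dynamics, the input bound, the velocity bound, and the terminal constraint v_K(t) = 0. -/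
open RealInnerProductSpace

/-- Euclidean-norm view of a plain `Fin d → ℝ` vector. -/
noncomputable def euc {d : ℕ} (x : Fin d → ℝ) : EuclideanSpace ℝ (Fin d) :=
  (EuclideanSpace.equiv (Fin d) ℝ).symm x

/-!
Shifting a feasible trajectory one stage forward and padding it with the zero input keeps
stages `1, …, K - 1` equal to stages `2, …, K` of the old trajectory, so they inherit its
constraints. The new last stage repeats the terminal state, which is a rest state: zero
velocity is an equilibrium of the double integrator under zero input, and the zero input meets
the actuator bound.
-/

theorem Matrix.fromBlocks_one_zero_mulVec_elim_zero {m n R : Type*} [Fintype m] [Fintype n]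
    [DecidableEq m] [NonAssocSemiring R] (M : Matrix m n R) (D : Matrix n n R) (p : m → R) :
    (Matrix.fromBlocks 1 M 0 D).mulVec (Sum.elim p 0) = Sum.elim p 0 := by
  rw [Matrix.fromBlocks_mulVec]
  simp

section Shift

variable {X U : Type*} {K k : ℕ}

theorem shifted_state_sub_one {x x' : ℕ → X} (hx' : ∀ k, x' k = x (min (k + 1) K))
    (hk1 : 1 ≤ k) (hkK : k ≤ K) : x' (k - 1) = x k := by
  rw [hx', Nat.sub_add_cancel hk1, min_eq_left hkK]

theorem shifted_input_sub_one [Zero U] {u u' : ℕ → U}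
    (hu' : ∀ k, u' k = if k + 1 ≤ K - 1 then u (k + 1) else 0) (hk1 : 1 ≤ k) :
    u' (k - 1) = if k < K then u k else 0 := by
  rw [hu', Nat.sub_add_cancel hk1]
  exact if_congr (by omega) rfl rfl

theorem shifted_dynamics [Zero U] (step : X → U → X) {x x' : ℕ → X} {u u' : ℕ → U}
    (hx' : ∀ k, x' k = x (min (k + 1) K))
    (hu' : ∀ k, u' k = if k + 1 ≤ K - 1 then u (k + 1) else 0)
    (hdyn : ∀ k, 1 ≤ k → k ≤ K → step (x (k - 1)) (u (k - 1)) = x k)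
    (hrest : step (x K) 0 = x K) :
    ∀ k, 1 ≤ k → k ≤ K → step (x' (k - 1)) (u' (k - 1)) = x' k := by
  intro k hk1 hkK
  rw [shifted_state_sub_one hx' hk1 hkK, shifted_input_sub_one hu' hk1, hx']
  rcases hkK.lt_or_eq with hlt | rfl
  · rw [if_pos hlt, min_eq_left hlt]
    simpa using hdyn (k + 1) (Nat.le_add_left 1 k) hlt
  · rw [if_neg (lt_irrefl k), min_eq_right (Nat.le_succ k), hrest]

theorem shifted_state_constraint {C : X → Prop} {x x' : ℕ → X}
    (hx' : ∀ k, x' k = x (min (k + 1) K)) (hx : ∀ k, 1 ≤ k → k ≤ K → C (x k)) :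
    ∀ k, 1 ≤ k → k ≤ K → C (x' k) := fun k hk1 hkK => by
  rw [hx']
  exact hx _ (le_min (Nat.le_add_left 1 k) (hk1.trans hkK)) (min_le_right _ _)

theorem shifted_input_constraint [Zero U] {C : U → Prop} {u u' : ℕ → U}
    (hu' : ∀ k, u' k = if k + 1 ≤ K - 1 then u (k + 1) else 0)
    (hu : ∀ k, 1 ≤ k → k ≤ K → C (u (k - 1))) (hC0 : C 0) :
    ∀ k, 1 ≤ k → k ≤ K → C (u' (k - 1)) := fun k hk1 hkK => by
  rw [shifted_input_sub_one hu' hk1]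
  split_ifs with hlt
  · simpa using hu (k + 1) (Nat.le_add_left 1 k) hlt
  · exact hC0

end Shift

theorem shifted_solution_feasible_general (d K : ℕ) (h : ℝ)
    (A : Matrix (Fin d ⊕ Fin d) (Fin d ⊕ Fin d) ℝ)
    (B : Matrix (Fin d ⊕ Fin d) (Fin d) ℝ)
    (hA : A = Matrix.fromBlocks 1 (h • 1) 0 1)
    (Θa Θv : Matrix (Fin d) (Fin d) ℝ)
    (amax vmax : ℝ) (hamax : 0 < amax)
    (p v u : ℕ → (Fin d → ℝ))
    (hdyn : ∀ k, 1 ≤ k → k ≤ K →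
      A.mulVec (Sum.elim (p (k - 1)) (v (k - 1))) + B.mulVec (u (k - 1))
        = Sum.elim (p k) (v k))
    (hu : ∀ k, 1 ≤ k → k ≤ K → ‖euc (Θa.mulVec (u (k - 1)))‖ ≤ amax)
    (hv : ∀ k, 1 ≤ k → k ≤ K → ‖euc (Θv.mulVec (v k))‖ ≤ vmax)
    (hterm : v K = 0)
    -- shifted sequences
    (p' v' u' : ℕ → (Fin d → ℝ))
    (hp' : ∀ k, p' k = p (min (k + 1) K))
    (hv' : ∀ k, v' k = v (min (k + 1) K))
    (hu' : ∀ k, u' k = if k + 1 ≤ K - 1 then u (k + 1) else 0) :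
    (∀ k, 1 ≤ k → k ≤ K →
      A.mulVec (Sum.elim (p' (k - 1)) (v' (k - 1))) + B.mulVec (u' (k - 1))
        = Sum.elim (p' k) (v' k)) ∧
    (∀ k, 1 ≤ k → k ≤ K → ‖euc (Θa.mulVec (u' (k - 1)))‖ ≤ amax) ∧
    (∀ k, 1 ≤ k → k ≤ K → ‖euc (Θv.mulVec (v' k))‖ ≤ vmax) ∧
    v' K = 0 := by
  have hrest : A.mulVec (Sum.elim (p K) (v K)) + B.mulVec 0 = Sum.elim (p K) (v K) := by
    rw [hterm, hA, Matrix.mulVec_zero, add_zero, Matrix.fromBlocks_one_zero_mulVec_elim_zero]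
  have hzero_input : ‖euc (Θa.mulVec 0)‖ ≤ amax := by
    simpa [euc] using hamax.le
  refine ⟨?_, shifted_input_constraint (C := fun w => ‖euc (Θa.mulVec w)‖ ≤ amax) hu' hu
    hzero_input, shifted_state_constraint (C := fun w => ‖euc (Θv.mulVec w)‖ ≤ vmax) hv' hv, ?_⟩
  · exact shifted_dynamics (fun z w => A.mulVec z + B.mulVec w)
      (x := fun k => Sum.elim (p k) (v k)) (x' := fun k => Sum.elim (p' k) (v' k))
      (fun k => by rw [hp', hv']) hu' hdyn hrest
  · rw [hv', min_eq_right (Nat.le_succ K), hterm]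

theorem shifted_solution_feasible (d K : ℕ) (hK : 1 ≤ K) (h : ℝ) (hh : 0 < h)
    (A : Matrix (Fin d ⊕ Fin d) (Fin d ⊕ Fin d) ℝ)
    (B : Matrix (Fin d ⊕ Fin d) (Fin d) ℝ)
    (hA : A = Matrix.fromBlocks 1 (h • 1) 0 1)
    (hB : B = Sum.elim (fun i => ((h ^ 2 / 2) • (1 : Matrix (Fin d) (Fin d) ℝ)) i)
                       (fun i => (h • (1 : Matrix (Fin d) (Fin d) ℝ)) i))
    (Θa Θv : Matrix (Fin d) (Fin d) ℝ)
    (hΘa : Θa.PosDef) (hΘv : Θv.PosDef)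
    (amax vmax : ℝ) (hamax : 0 < amax) (hvmax : 0 < vmax)
    (p v u : ℕ → (Fin d → ℝ))
    (hdyn : ∀ k, 1 ≤ k → k ≤ K →
      A.mulVec (Sum.elim (p (k - 1)) (v (k - 1))) + B.mulVec (u (k - 1))
        = Sum.elim (p k) (v k))
    (hu : ∀ k, 1 ≤ k → k ≤ K → ‖euc (Θa.mulVec (u (k - 1)))‖ ≤ amax)
    (hv : ∀ k, 1 ≤ k → k ≤ K → ‖euc (Θv.mulVec (v k))‖ ≤ vmax)
    (hterm : v K = 0)
    -- shifted sequences
    (p' v' u' : ℕ → (Fin d → ℝ))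
    (hp' : ∀ k, p' k = p (min (k + 1) K))
    (hv' : ∀ k, v' k = v (min (k + 1) K))
    (hu' : ∀ k, u' k = if k + 1 ≤ K - 1 then u (k + 1) else 0) :
    (∀ k, 1 ≤ k → k ≤ K →
      A.mulVec (Sum.elim (p' (k - 1)) (v' (k - 1))) + B.mulVec (u' (k - 1))
        = Sum.elim (p' k) (v' k)) ∧
    (∀ k, 1 ≤ k → k ≤ K → ‖euc (Θa.mulVec (u' (k - 1)))‖ ≤ amax) ∧
    (∀ k, 1 ≤ k → k ≤ K → ‖euc (Θv.mulVec (v' k))‖ ≤ vmax) ∧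
    v' K = 0 :=
  shifted_solution_feasible_general d K h A B hA Θa Θv amax vmax hamax p v u hdyn hu hv hterm p' v'
    u' hp' hv' hu'
end

section
/- Symmetry of MBVC constraints: with a^{ij} = (p̄ⁱ - p̄ʲ)/‖p̄ⁱ - p̄ʲ‖₂ and b^{ij} = (a^{ij})ᵀ(p̄ⁱ + p̄ʲ)/2 + r'/2, and analogously a^{ji} = -a^{ij}, b^{ji} = (a^{ji})ᵀ(p̄ⁱ + p̄ʲ)/2 + r'/2, if points pⁱ, pʲ satisfy (a^{ij})ᵀ pⁱ ≥ b^{ij} and (a^{ji})ᵀ pʲ ≥ b^{ji}, then ‖pⁱ - pʲ‖₂ ≥ r'. -/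
open RealInnerProductSpace

section HalfSpaceSeparation

variable {E : Type*} [NormedAddCommGroup E] [InnerProductSpace ℝ E]

theorem le_norm_of_le_inner_of_norm_le_one {a x : E} {r : ℝ} (ha : ‖a‖ ≤ 1)
    (hr : r ≤ ⟪a, x⟫) : r ≤ ‖x‖ :=
  calc r ≤ ⟪a, x⟫ := hr
    _ ≤ ‖a‖ * ‖x‖ := real_inner_le_norm a x
    _ ≤ ‖x‖ := mul_le_of_le_one_left (norm_nonneg x) ha

/-- The two half-spaces are separated by a slab of width `r / ‖a‖` around the hyperplane
`⟪a, ·⟫ = ⟪a, c⟫`. -/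
theorem le_norm_sub_of_opposite_half_spaces {a c p q : E} {r : ℝ} (ha : ‖a‖ ≤ 1)
    (hp : ⟪a, p⟫ ≥ ⟪a, c⟫ + r / 2) (hq : ⟪-a, q⟫ ≥ ⟪-a, c⟫ + r / 2) :
    r ≤ ‖p - q‖ := by
  rw [inner_neg_left, inner_neg_left] at hq
  refine le_norm_of_le_inner_of_norm_le_one ha ?_
  rw [inner_sub_right]
  linarith

end HalfSpaceSeparation

theorem mbvc_symmetric_constraints_general (d : ℕ)
    (pbar_i pbar_j : EuclideanSpace ℝ (Fin d)) (hne : pbar_i ≠ pbar_j)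
    (r' : ℝ)
    (aij aji : EuclideanSpace ℝ (Fin d)) (bij bji : ℝ)
    (haij : aij = ‖pbar_i - pbar_j‖⁻¹ • (pbar_i - pbar_j))
    (haji : aji = -aij)
    (hbij : bij = ⟪aij, (1 / 2 : ℝ) • (pbar_i + pbar_j)⟫ + r' / 2)
    (hbji : bji = ⟪aji, (1 / 2 : ℝ) • (pbar_i + pbar_j)⟫ + r' / 2)
    (p_i p_j : EuclideanSpace ℝ (Fin d))
    (hi : ⟪aij, p_i⟫ ≥ bij) (hj : ⟪aji, p_j⟫ ≥ bji) :
    ‖p_i - p_j‖ ≥ r' := by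
  have haij_unit : ‖aij‖ = 1 := haij ▸ norm_smul_inv_norm (sub_ne_zero.mpr hne)
  subst hbij hbji haji
  exact le_norm_sub_of_opposite_half_spaces haij_unit.le hi hj

theorem mbvc_symmetric_constraints (d : ℕ)
    (pbar_i pbar_j : EuclideanSpace ℝ (Fin d)) (hne : pbar_i ≠ pbar_j)
    (r' : ℝ) (hr' : 0 < r')
    (aij aji : EuclideanSpace ℝ (Fin d)) (bij bji : ℝ)
    (haij : aij = ‖pbar_i - pbar_j‖⁻¹ • (pbar_i - pbar_j))
    (haji : aji = -aij)
    (hbij : bij = ⟪aij, (1 / 2 : ℝ) • (pbar_i + pbar_j)⟫ + r' / 2)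
    (hbji : bji = ⟪aji, (1 / 2 : ℝ) • (pbar_i + pbar_j)⟫ + r' / 2)
    (p_i p_j : EuclideanSpace ℝ (Fin d))
    (hi : ⟪aij, p_i⟫ ≥ bij) (hj : ⟪aji, p_j⟫ ≥ bji) :
    ‖p_i - p_j‖ ≥ r' :=
  mbvc_symmetric_constraints_general d pbar_i pbar_j hne r' aij aji bij bji haij haji hbij hbji p_i
    p_j hi hj
end
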